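/- (L'Hospital Monotone Rule) Let I be an interval in ℝ with interior I°, and let f and g be continuous real-valued functions on I that are differentiable on I° with g'(x) ≠ 0 for every x in I°. If f'/g' is strictly increasing on I°, then for every c in I the function x ↦ (f(x) − f(c))/(g(x) − g(c)) is strictly increasing on I \ {c}; if f'/g' is strictly decreasing on I°, then for every c in I this function is strictly decreasing on I \ {c}. -/
import Mathlib

open Set

private lemma mediant_pos {n1 n2 d1 d2 : ℝ} (h1 : 0 < d1) (h2 : 0 < d2)
    (h : n1 / d1 < n2 / d2) :
    n1 / d1 < (n1 + n2) / (d1 + d2) ∧ (n1 + n2) / (d1 + d2) < n2 / d2 := by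
  rw [div_lt_div_iff₀ h1 h2] at h
  constructor
  · rw [div_lt_div_iff₀ h1 (by linarith)]; nlinarith
  · rw [div_lt_div_iff₀ (by linarith) h2]; nlinarith

private lemma mediant' {n1 n2 d1 d2 : ℝ}
    (h12 : (0 < d1 ∧ 0 < d2) ∨ (d1 < 0 ∧ d2 < 0))
    (h : n1 / d1 < n2 / d2) :
    n1 / d1 < (n1 + n2) / (d1 + d2) ∧ (n1 + n2) / (d1 + d2) < n2 / d2 := by
  rcases h12 with ⟨h1, h2⟩ | ⟨h1, h2⟩
  · exact mediant_pos h1 h2 h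
  · have h' : (-n1) / (-d1) < (-n2) / (-d2) := by rwa [neg_div_neg_eq, neg_div_neg_eq]
    have := mediant_pos (neg_pos.2 h1) (neg_pos.2 h2) h'
    rw [show -n1 + -n2 = -(n1 + n2) by ring, show -d1 + -d2 = -(d1 + d2) by ring,
      neg_div_neg_eq, neg_div_neg_eq, neg_div_neg_eq] at this
    exact this

private lemma lhmr_mono (I : Set ℝ) (hI : I.OrdConnected)
    (f g f' g' : ℝ → ℝ)
    (hfc : ContinuousOn f I) (hgc : ContinuousOn g I)
    (hf' : ∀ x ∈ interior I, HasDerivAt f (f' x) x)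
    (hg' : ∀ x ∈ interior I, HasDerivAt g (g' x) x)
    (hg0 : ∀ x ∈ interior I, g' x ≠ 0)
    (hmono : StrictMonoOn (fun x => f' x / g' x) (interior I)) :
    ∀ c ∈ I, StrictMonoOn (fun x => (f x - f c) / (g x - g c)) (I \ {c}) := by
  have hconv : Convex ℝ I := convex_iff_ordConnected.2 hI
  -- g' has constant sign on interior I
  have hsign := hasDerivWithinAt_forall_lt_or_forall_gt_of_forall_ne hconv.interior
    (fun x hx => (hg' x hx).hasDerivWithinAt) (m := 0) hg0
  -- g is strictly monotone or strictly antitone on I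
  have hgsign : (∀ a ∈ I, ∀ b ∈ I, a < b → 0 < g b - g a) ∨
      (∀ a ∈ I, ∀ b ∈ I, a < b → g b - g a < 0) := by
    rcases hsign with hneg | hpos
    · right
      have hanti : StrictAntiOn g I := strictAntiOn_of_hasDerivWithinAt_neg hconv hgc
        (fun x hx => (hg' x hx).hasDerivWithinAt.mono interior_subset) hneg
      exact fun a ha b hb hab => sub_neg.2 (hanti ha hb hab)
    · left
      have hmono : StrictMonoOn g I := strictMonoOn_of_hasDerivWithinAt_pos hconv hgc
        (fun x hx => (hg' x hx).hasDerivWithinAt.mono interior_subset) hpos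
      exact fun a ha b hb hab => sub_pos.2 (hmono ha hb hab)
  have hgne : ∀ a ∈ I, ∀ b ∈ I, a < b → g b - g a ≠ 0 := by
    rcases hgsign with h | h
    · exact fun a ha b hb hab => (h a ha b hb hab).ne'
    · exact fun a ha b hb hab => (h a ha b hb hab).ne
  have hIoo : ∀ a ∈ I, ∀ b ∈ I, Ioo a b ⊆ interior I := by
    intro a ha b hb
    have hsub : Ioo a b ⊆ I := fun x hx => hI.out ha hb ⟨le_of_lt hx.1, le_of_lt hx.2⟩
    exact isOpen_Ioo.subset_interior_iff.2 hsub
  -- slope via Cauchy MVT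
  have hslope : ∀ a ∈ I, ∀ b ∈ I, a < b →
      ∃ ξ ∈ Ioo a b, (f b - f a) / (g b - g a) = f' ξ / g' ξ := by
    intro a ha b hb hab
    have hIcc : Icc a b ⊆ I := fun x hx => hI.out ha hb hx
    have hIooI := hIoo a ha b hb
    obtain ⟨ξ, hξ, heq⟩ := exists_ratio_hasDerivAt_eq_ratio_slope f f' hab
      (hfc.mono hIcc) (fun x hx => hf' x (hIooI hx))
      g g' (hgc.mono hIcc) (fun x hx => hg' x (hIooI hx))
    refine ⟨ξ, hξ, ?_⟩
    rw [div_eq_div_iff (hgne a ha b hb hab) (hg0 ξ (hIooI hξ))]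
    linarith [heq]
  -- step 1: adjacent slopes
  have step1 : ∀ a ∈ I, ∀ b ∈ I, ∀ d ∈ I, a < b → b < d →
      (f b - f a) / (g b - g a) < (f d - f b) / (g d - g b) := by
    intro a ha b hb d hd hab hbd
    obtain ⟨ξ₁, hξ₁, e1⟩ := hslope a ha b hb hab
    obtain ⟨ξ₂, hξ₂, e2⟩ := hslope b hb d hd hbd
    rw [e1, e2]
    exact hmono (hIoo a ha b hb hξ₁) (hIoo b hb d hd hξ₂) (lt_trans hξ₁.2 hξ₂.1)
  -- step 2: mediant inequalities
  have step2 : ∀ a ∈ I, ∀ b ∈ I, ∀ d ∈ I, a < b → b < d →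
      (f b - f a) / (g b - g a) < (f d - f a) / (g d - g a) ∧
      (f d - f a) / (g d - g a) < (f d - f b) / (g d - g b) := by
    intro a ha b hb d hd hab hbd
    have h1 := step1 a ha b hb d hd hab hbd
    have h12 : (0 < g b - g a ∧ 0 < g d - g b) ∨ (g b - g a < 0 ∧ g d - g b < 0) := by
      rcases hgsign with h | h
      · exact Or.inl ⟨h a ha b hb hab, h b hb d hd hbd⟩
      · exact Or.inr ⟨h a ha b hb hab, h b hb d hd hbd⟩
    have := mediant' h12 h1
    rw [show (f b - f a) + (f d - f b) = f d - f a by ring,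
      show (g b - g a) + (g d - g b) = g d - g a by ring] at this
    exact this
  -- symmetry of slopes
  have hsym : ∀ u v : ℝ, (f u - f v) / (g u - g v) = (f v - f u) / (g v - g u) := by
    intro u v
    rw [show f u - f v = -(f v - f u) by ring, show g u - g v = -(g v - g u) by ring,
      neg_div_neg_eq]
  intro c hc x hx y hy hxy
  simp only
  rcases lt_or_gt_of_ne (show x ≠ c from hx.2) with hxc | hcx
  · rcases lt_or_gt_of_ne (show y ≠ c from hy.2) with hyc | hcy
    · -- x < y < c
      rw [hsym x c, hsym y c]
      exact (step2 x hx.1 y hy.1 c hc hxy hyc).2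
    · -- x < c < y
      rw [hsym x c]
      exact step1 x hx.1 c hc y hy.1 hxc hcy
  · -- c < x < y
    exact (step2 c hc x hx.1 y hy.1 hcx hxy).1

/-- L'Hospital Monotone Rule: if `I` is an interval (order-connected set) in `ℝ`,
`f, g` are continuous on `I`, differentiable on its interior with `g' ≠ 0` there,
and `f'/g'` is strictly monotone on the interior, then for every `c ∈ I` the
function `x ↦ (f x - f c)/(g x - g c)` is strictly monotone (in the same sense)
on `I \ {c}`. -/
theorem lhospital_monotone_rule (I : Set ℝ) (hI : I.OrdConnected)
    (f g f' g' : ℝ → ℝ)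
    (hfc : ContinuousOn f I) (hgc : ContinuousOn g I)
    (hf' : ∀ x ∈ interior I, HasDerivAt f (f' x) x)
    (hg' : ∀ x ∈ interior I, HasDerivAt g (g' x) x)
    (hg0 : ∀ x ∈ interior I, g' x ≠ 0) :
    (StrictMonoOn (fun x => f' x / g' x) (interior I) →
      ∀ c ∈ I, StrictMonoOn (fun x => (f x - f c) / (g x - g c)) (I \ {c})) ∧
    (StrictAntiOn (fun x => f' x / g' x) (interior I) →
      ∀ c ∈ I, StrictAntiOn (fun x => (f x - f c) / (g x - g c)) (I \ {c})) := by
  constructor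
  · exact lhmr_mono I hI f g f' g' hfc hgc hf' hg' hg0
  · intro hanti c hc
    have hmono' : StrictMonoOn (fun x => (-f' x) / g' x) (interior I) := by
      intro a ha b hb hab
      have := hanti ha hb hab
      simp only [neg_div]
      exact neg_lt_neg this
    have H := lhmr_mono I hI (fun x => -f x) g (fun x => -f' x) g'
      hfc.neg hgc (fun x hx => (hf' x hx).neg) hg' hg0 hmono' c hc
    intro x hx y hy hxy
    have h := H hx hy hxy
    simp only at h
    have e : ∀ u : ℝ, (-f u - -f c) / (g u - g c) = -((f u - f c) / (g u - g c)) := by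
      intro u
      rw [show -f u - -f c = -(f u - f c) by ring, neg_div]
    rw [e x, e y, neg_lt_neg_iff] at h
    exact h
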